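/- arXiv:1805.06116 — 2 statements merged into one kernel-verified Lean document; each statement's English description precedes it below -/
import Mathlib

section
/- Let f_{C,ω} be as in Example 1 (f_{C,ω}(t) = cos(ωt)/|t| for |t| ≥ 1/C, = C cos(ωt) for |t| < 1/C). Let Λ = {(x_1,ω_1),...,(x_N,ω_N)} ⊂ R^2 with pairwise distinct x_i and let M = min_{i≠j} |x_i - x_j| > 0. If C > (N-1)/M, then the functions exp(2πi ω_i t) f_{C,ω}(t - x_i) are linearly independent. -/
/-! Evaluating the functions at the points `x j` gives the matrix
`(exp (2πi ω_i x_j) f_{C,ω} (x_j - x_i))`. Its diagonal entries have modulus `f_{C,ω} 0 = C`, and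
each of the `N - 1` off-diagonal entries of a row has modulus at most `1 / M < C / (N - 1)`, so the
matrix is strictly diagonally dominant, hence nonsingular (Gershgorin), and a linear relation among
the functions would be one among its rows. -/

open Finset

theorem linearIndependent_of_eval_sum_row_lt_diag {K ι α : Type*} [NormedField K] [Fintype ι]
    [DecidableEq ι] {g : ι → α → K} (p : ι → α)
    (h : ∀ i, ∑ j ∈ univ.erase i, ‖g i (p j)‖ < ‖g i (p i)‖) :
    LinearIndependent K g :=
  LinearIndependent.of_comp (LinearMap.funLeft K K p) <|
    Matrix.linearIndependent_rows_of_det_ne_zero (A := Matrix.of fun i j => g i (p j))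
      (det_ne_zero_of_sum_row_lt_diag h)

noncomputable def timeFreqShift (x ω : ℝ) (f : ℝ → ℂ) (t : ℝ) : ℂ :=
  Complex.exp (2 * Real.pi * Complex.I * ((ω * t : ℝ) : ℂ)) * f (t - x)

theorem norm_timeFreqShift (x ω : ℝ) (f : ℝ → ℂ) (t : ℝ) :
    ‖timeFreqShift x ω f t‖ = ‖f (t - x)‖ := by
  simp [timeFreqShift, Complex.norm_exp]

theorem linearIndependent_timeFreqShift {ι : Type*} [Fintype ι] {f : ℝ → ℂ} (hf0 : f 0 ≠ 0)
    (x w : ι → ℝ) (h : ∀ i j, i ≠ j → ‖f (x j - x i)‖ < ‖f 0‖ / (Fintype.card ι - 1)) :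
    LinearIndependent ℂ fun i => timeFreqShift (x i) (w i) f := by
  classical
  refine linearIndependent_of_eval_sum_row_lt_diag x fun i => ?_
  simp only [norm_timeFreqShift, sub_self]
  rcases (univ.erase i).eq_empty_or_nonempty with hi | hi
  · simpa [hi] using hf0
  calc ∑ j ∈ univ.erase i, ‖f (x j - x i)‖
      < ∑ j ∈ univ.erase i, ‖f 0‖ / (Fintype.card ι - 1) :=
        sum_lt_sum_of_nonempty hi fun j hj => h i j (ne_of_mem_erase hj).symm
    _ = ‖f 0‖ := by
        have hcard : ((univ.erase i).card : ℝ) = Fintype.card ι - 1 := by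
          rw [card_erase_of_mem (mem_univ i), card_univ,
            Nat.cast_pred (Fintype.card_pos_iff.2 ⟨i⟩)]
        rw [sum_const, nsmul_eq_mul, ← hcard, mul_div_cancel₀ _ (mod_cast hi.card_pos.ne')]

/-- The function `f_{C,ω}` of Example 1. -/
noncomputable def dampedCos (C ω t : ℝ) : ℝ :=
  if |t| < 1 / C then C * Real.cos (ω * t) else Real.cos (ω * t) / |t|

theorem dampedCos_zero {C : ℝ} (hC : 0 < C) (ω : ℝ) : dampedCos C ω 0 = C := by
  simp [dampedCos, hC]

theorem abs_dampedCos_le {C t : ℝ} (ω : ℝ) (ht : 1 / C ≤ |t|) : |dampedCos C ω t| ≤ |t|⁻¹ := by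
  rw [dampedCos, if_neg ht.not_gt, abs_div, abs_abs, div_eq_mul_inv]
  exact mul_le_of_le_one_left (by positivity) (Real.abs_cos_le_one _)

theorem stmt_11_general {N : ℕ} (C ω : ℝ) (hC : 0 < C)
    (x w : Fin N → ℝ)
    (M : ℝ) (hM0 : 0 < M) (hM : ∀ i j, i ≠ j → M ≤ |x i - x j|)
    (hCM : ((N : ℝ) - 1) / M < C) :
    LinearIndependent ℂ
      (fun i : Fin N => (fun t =>
        Complex.exp (2 * Real.pi * Complex.I * ((w i * t : ℝ) : ℂ)) *
          ((if |t - x i| < 1 / C then C * Real.cos (ω * (t - x i))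
            else Real.cos (ω * (t - x i)) / |t - x i| : ℝ) : ℂ) : ℝ → ℂ)) := by
  refine linearIndependent_timeFreqShift (f := fun t => (dampedCos C ω t : ℂ))
    (by simp [dampedCos_zero hC, hC.ne']) x w fun i j hij => ?_
  have hN : (2 : ℝ) ≤ N := by
    exact_mod_cast Fintype.card_fin N ▸ Fintype.one_lt_card_iff.2 ⟨i, j, hij⟩
  have hMC : 1 / C < M := by
    rw [div_lt_iff₀ hC]
    rw [div_lt_iff₀ hM0] at hCM
    linarith
  have hsep : M ≤ |x j - x i| := hM j i hij.symm
  simp only [Complex.norm_real, Real.norm_eq_abs, dampedCos_zero hC, abs_of_pos hC,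
    Fintype.card_fin]
  calc |dampedCos C ω (x j - x i)| ≤ |x j - x i|⁻¹ := abs_dampedCos_le ω (hMC.le.trans hsep)
    _ ≤ M⁻¹ := inv_anti₀ hM0 hsep
    _ < C / (N - 1) := by
        rw [lt_div_iff₀ (by linarith), inv_mul_eq_div]
        exact hCM

/-- Example 1: the time-frequency translates of `f_{C,ω}` along a set `Λ` whose
time coordinates are separated by at least `M` are linearly independent as soon
as `C > (N-1)/M`. -/
theorem stmt_11 {N : ℕ} (hN : 2 ≤ N) (C ω : ℝ) (hC : 0 < C)
    (x w : Fin N → ℝ) (hx : Function.Injective x)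
    (M : ℝ) (hM0 : 0 < M) (hM : ∀ i j, i ≠ j → M ≤ |x i - x j|)
    (hCM : ((N : ℝ) - 1) / M < C) :
    LinearIndependent ℂ
      (fun i : Fin N => (fun t =>
        Complex.exp (2 * Real.pi * Complex.I * ((w i * t : ℝ) : ℂ)) *
          ((if |t - x i| < 1 / C then C * Real.cos (ω * (t - x i))
            else Real.cos (ω * (t - x i)) / |t - x i| : ℝ) : ℂ) : ℝ → ℂ)) :=
  stmt_11_general C ω hC x w M hM0 hM hCM
end

section
/- Let f : R^n → C be continuous and suppose there exist a point x_0 ∈ R^n and R > 0 with |f(x_0 + t)| < |f(x_0)|/(N-1) for all ‖t‖ > R. Then for any Λ = {(x_1,ω_1),...,(x_N,ω_N)} ⊂ R^{2n} with ‖x_i - x_j‖ > R for i ≠ j, the time-frequency translates π(x_i,ω_i)f are linearly independent. -/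
/-!
Evaluate the family at the points `x j + x₀`. At its own point the `j`-th translate has modulus
`|f x₀|`, while each of the other `N - 1` translates has modulus `|f (x₀ + x j - x i)|`, which is
smaller than `|f x₀| / (N - 1)` by the separation of the `x i`. The evaluation matrix is therefore
strictly diagonally dominant, hence invertible by Gershgorin, so the family is linearly independent.
-/

open Finset

theorem linearIndependent_of_det_eval_ne_zero {ι α K : Type*} [Fintype ι] [DecidableEq ι]
    [Field K] (φ : ι → α → K) (p : ι → α) (h : (Matrix.of fun j i => φ i (p j)).det ≠ 0) :
    LinearIndependent K φ := by
  rw [Fintype.linearIndependent_iff]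
  intro g hg
  refine congrFun (Matrix.eq_zero_of_mulVec_eq_zero h (funext fun j => ?_))
  simpa [Matrix.mulVec, dotProduct, mul_comm] using congrFun hg (p j)

theorem linearIndependent_of_sum_norm_eval_lt {ι α K : Type*} [Fintype ι] [DecidableEq ι]
    [NormedField K] (φ : ι → α → K) (p : ι → α)
    (h : ∀ j, ∑ i ∈ univ.erase j, ‖φ i (p j)‖ < ‖φ j (p j)‖) :
    LinearIndependent K φ :=
  linearIndependent_of_det_eval_ne_zero φ p (det_ne_zero_of_sum_row_lt_diag h)

theorem Finset.sum_lt_of_forall_lt_div_card {ι 𝕜 : Type*} [Field 𝕜] [LinearOrder 𝕜]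
    [IsStrictOrderedRing 𝕜] {s : Finset ι} {a : ι → 𝕜} {c : 𝕜} (hs : s.Nonempty)
    (h : ∀ i ∈ s, a i < c / #s) : ∑ i ∈ s, a i < c := by
  have hcard : (0 : 𝕜) < #s := by exact_mod_cast hs.card_pos
  calc ∑ i ∈ s, a i < ∑ _i ∈ s, c / #s := sum_lt_sum_of_nonempty hs h
    _ = c := by rw [sum_const, nsmul_eq_mul]; field_simp

section TimeFrequencyShift

variable {E : Type*} [NormedAddCommGroup E] [InnerProductSpace ℝ E]

/-- The paper's `π(x, ω) f`. -/
noncomputable def timeFrequencyShift (x ω : E) (f : E → ℂ) : E → ℂ := fun t =>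
  Complex.exp (2 * Real.pi * Complex.I * ((inner ℝ ω t : ℝ) : ℂ)) * f (t - x)

theorem norm_timeFrequencyShift_apply (x ω : E) (f : E → ℂ) (t : E) :
    ‖timeFrequencyShift x ω f t‖ = ‖f (t - x)‖ := by
  have hphase : 2 * Real.pi * Complex.I * ((inner ℝ ω t : ℝ) : ℂ)
      = ((2 * Real.pi * inner ℝ ω t : ℝ) : ℂ) * Complex.I := by
    push_cast; ring
  rw [timeFrequencyShift, norm_mul, hphase, Complex.norm_exp_ofReal_mul_I, one_mul]

end TimeFrequencyShift

theorem stmt_14_general {n N : ℕ} (hN : 2 ≤ N)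
    (f : EuclideanSpace ℝ (Fin n) → ℂ)
    (x₀ : EuclideanSpace ℝ (Fin n)) (R : ℝ)
    (hdecay : ∀ t : EuclideanSpace ℝ (Fin n), R < ‖t‖ →
      ‖f (x₀ + t)‖ < ‖f x₀‖ / ((N : ℝ) - 1))
    (x ω : Fin N → EuclideanSpace ℝ (Fin n))
    (hsep : ∀ i j, i ≠ j → R < ‖x i - x j‖) :
    LinearIndependent ℂ
      (fun i : Fin N => (fun t =>
        Complex.exp (2 * Real.pi * Complex.I * ((inner ℝ (ω i) t : ℝ) : ℂ)) *
          f (t - x i) : EuclideanSpace ℝ (Fin n) → ℂ)) := by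
  refine linearIndependent_of_sum_norm_eval_lt (fun i => timeFrequencyShift (x i) (ω i) f)
    (fun j => x j + x₀) fun j => ?_
  simp only [norm_timeFrequencyShift_apply, add_sub_cancel_left]
  have hcard : (#(univ.erase j) : ℝ) = (N : ℝ) - 1 := by
    rw [card_erase_of_mem (mem_univ j), card_univ, Fintype.card_fin,
      Nat.cast_sub (by omega : 1 ≤ N), Nat.cast_one]
  refine sum_lt_of_forall_lt_div_card ?_ fun i hi => ?_
  · rw [← card_pos, card_erase_of_mem (mem_univ j), card_univ, Fintype.card_fin]
    omega
  · rw [hcard, show x j + x₀ - x i = x₀ + (x j - x i) by abel]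
    exact hdecay _ (hsep j i (ne_of_mem_erase hi).symm)

/-- The translated version of Theorem 1: if `|f (x₀ + t)| < |f x₀|/(N-1)` for
`‖t‖ > R` and the time coordinates of `Λ` are separated by more than `R`, the
time-frequency translates of `f` are linearly independent. -/
theorem stmt_14 {n N : ℕ} (hN : 2 ≤ N)
    (f : EuclideanSpace ℝ (Fin n) → ℂ) (hf : Continuous f)
    (x₀ : EuclideanSpace ℝ (Fin n)) (R : ℝ) (hR : 0 < R)
    (hdecay : ∀ t : EuclideanSpace ℝ (Fin n), R < ‖t‖ →
      ‖f (x₀ + t)‖ < ‖f x₀‖ / ((N : ℝ) - 1))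
    (x ω : Fin N → EuclideanSpace ℝ (Fin n))
    (hsep : ∀ i j, i ≠ j → R < ‖x i - x j‖) :
    LinearIndependent ℂ
      (fun i : Fin N => (fun t =>
        Complex.exp (2 * Real.pi * Complex.I * ((inner ℝ (ω i) t : ℝ) : ℂ)) *
          f (t - x i) : EuclideanSpace ℝ (Fin n) → ℂ)) :=
  stmt_14_general hN f x₀ R hdecay x ω hsep
end
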